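/- Define the Hadamard (Fourier) transform over F₂ⁿ as the complex matrix H indexed by V × V with entries H(x,y) = 2^{−n/2} · (−1)^{⟨x,y⟩}, and for a submodule A of V define the subspace state |A⟩ = |A|^{−1/2} · ∑_{a ∈ A} e_a. Then for every submodule A of V: H · |A⟩ = |A^⊥⟩, i.e. applying the Hadamard transform to the uniform superposition over A produces the uniform superposition over A^⊥. -/

import Mathlib

open scoped BigOperators Kronecker Classical ComplexOrder

noncomputable section

/-- The vector space `F₂ⁿ`. -/
abbrev V (n : ℕ) : Type := Fin n → ZMod 2

/-- The standard bilinear pairing `⟨x,y⟩ = ∑ i, xᵢ * yᵢ` on `F₂ⁿ`. -/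
def pairing {n : ℕ} (x y : V n) : ZMod 2 := ∑ i, x i * y i

/-- `(−1)^b ∈ ℂ` for `b : ZMod 2`. -/
def sign (b : ZMod 2) : ℂ := if b = 0 then 1 else -1

lemma pairing_add_right {n : ℕ} (x y z : V n) :
    pairing x (y + z) = pairing x y + pairing x z := by
  simp [pairing, mul_add, Finset.sum_add_distrib]

lemma pairing_smul_right {n : ℕ} (c : ZMod 2) (x y : V n) :
    pairing x (c • y) = c * pairing x y := by
  simp only [pairing, Pi.smul_apply, smul_eq_mul, Finset.mul_sum]
  exact Finset.sum_congr rfl fun i _ => by ring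

/-- The orthogonal complement `A^⊥ = {y | ∀ a ∈ A, ⟨a,y⟩ = 0}`. -/
def perp {n : ℕ} (A : Submodule (ZMod 2) (V n)) : Submodule (ZMod 2) (V n) where
  carrier := {y | ∀ a ∈ A, pairing a y = 0}
  zero_mem' := by
    simp only [Set.mem_setOf_eq]
    intro a _
    simp [pairing]
  add_mem' := by
    intro y z hy hz
    simp only [Set.mem_setOf_eq] at *
    intro a ha
    rw [pairing_add_right, hy a ha, hz a ha, add_zero]
  smul_mem' := by
    intro c y hy
    simp only [Set.mem_setOf_eq] at *
    intro a ha
    rw [pairing_smul_right, hy a ha, mul_zero]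

/-- The coset `A + s = {a + s : a ∈ A}`. -/
def coset {n : ℕ} (A : Submodule (ZMod 2) (V n)) (s : V n) : Set (V n) :=
  {v | ∃ a ∈ A, v = a + s}

noncomputable instance {n : ℕ} (A : Submodule (ZMod 2) (V n)) : Fintype A :=
  Fintype.ofFinite _

/-- The coset state `|A_{s,s'}⟩ = |A|^{−1/2} ∑_{a ∈ A} (−1)^{⟨a,s'⟩} e_{a+s}`. -/
noncomputable def cosetState {n : ℕ} (A : Submodule (ZMod 2) (V n)) (s s' : V n) :
    EuclideanSpace ℂ (V n) :=
  ((Real.sqrt (Nat.card A) : ℂ))⁻¹ •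
    ∑ a : A, sign (pairing (a : V n) s') • EuclideanSpace.single ((a : V n) + s) (1 : ℂ)

/-- A family of orthogonal projections: each member is Hermitian and idempotent. -/
def IsProjFamily {ι m : Type*} [Fintype m] (P : ι → Matrix m m ℂ) : Prop :=
  ∀ p, (P p).IsHermitian ∧ P p * P p = P p

/-- Coset invariance of a family indexed by pairs `(s, s')`:
the value depends only on the pair of cosets `(A + s, A^⊥ + s')`. -/
def CosetInvariant {n : ℕ} {α : Type*} (A : Submodule (ZMod 2) (V n))
    (F : V n × V n → α) : Prop :=
  ∀ s₁ s₁' s₂ s₂' : V n, coset A s₁ = coset A s₂ →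
    coset (perp A) s₁' = coset (perp A) s₂' → F (s₁, s₁') = F (s₂, s₂')

/-- The rank-one matrix `|A_{s,s'}⟩⟨A_{s,s'}|`. -/
noncomputable def outer {n : ℕ} (A : Submodule (ZMod 2) (V n)) (s s' : V n) :
    Matrix (V n) (V n) ℂ :=
  Matrix.of fun x y => cosetState A s s' x * (starRingEnd ℂ) (cosetState A s s' y)

/-- `Π^A[P,Q] = 2^{−n} ∑_{s,s'} |A_{s,s'}⟩⟨A_{s,s'}| ⊗ P(s,s') ⊗ Q(s,s')`. -/
noncomputable def PiMat {n : ℕ} {I J : Type*} [Fintype I] [Fintype J]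
    (A : Submodule (ZMod 2) (V n)) (P : V n × V n → Matrix I I ℂ)
    (Q : V n × V n → Matrix J J ℂ) : Matrix (V n × I × J) (V n × I × J) ℂ :=
  ((2 : ℂ) ^ n)⁻¹ • ∑ s : V n, ∑ s' : V n, (outer A s s') ⊗ₖ (P (s, s') ⊗ₖ Q (s, s'))

/-- The `ℓ² → ℓ²` operator norm of a complex square matrix. -/
noncomputable def opNorm {m : Type*} [Fintype m] [DecidableEq m] (M : Matrix m m ℂ) : ℝ :=
  ‖Matrix.toEuclideanCLM (𝕜 := ℂ) M‖

/-- The Hadamard (Fourier) transform over `F₂ⁿ`: `H(x,y) = 2^{−n/2} (−1)^{⟨x,y⟩}`. -/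
noncomputable def Hmat (n : ℕ) : Matrix (V n) (V n) ℂ :=
  Matrix.of fun x y => ((Real.sqrt ((2 : ℝ) ^ n) : ℂ))⁻¹ * sign (pairing x y)

/-- The subspace state `|A⟩ = |A|^{−1/2} ∑_{a ∈ A} e_a`. -/
noncomputable def subspaceState {n : ℕ} (A : Submodule (ZMod 2) (V n)) :
    EuclideanSpace ℂ (V n) :=
  ((Real.sqrt (Nat.card A) : ℂ))⁻¹ • ∑ a : A, EuclideanSpace.single ((a : V n)) (1 : ℂ)


/-! The `x`-th entry of `H |A⟩` is, up to normalisation, the sum over `A` of the character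
`a ↦ (-1)^⟨x,a⟩`, which is `|A|` if `x ∈ A^⊥` and `0` otherwise. The normalisations match
because `|A| · |A^⊥| = 2^n`, the pairing being a nondegenerate bilinear form. -/

lemma pairing_eq_dotProduct {n : ℕ} (x y : V n) : pairing x y = x ⬝ᵥ y := rfl

lemma ZMod.eq_zero_or_eq_one (b : ZMod 2) : b = 0 ∨ b = 1 := by
  revert b; decide

lemma sign_add (a b : ZMod 2) : sign (a + b) = sign a * sign b := by
  rcases a.eq_zero_or_eq_one with rfl | rfl <;> rcases b.eq_zero_or_eq_one with rfl | rfl <;>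
    simp [sign, (by decide : (1 : ZMod 2) + 1 = 0)]

@[simps]
def signChar : AddChar (ZMod 2) ℂ where
  toFun := sign
  map_zero_eq_one' := rfl
  map_add_eq_mul' := sign_add

lemma signChar_injective : Function.Injective signChar := by
  intro a b h
  rcases a.eq_zero_or_eq_one with rfl | rfl <;> rcases b.eq_zero_or_eq_one with rfl | rfl <;>
    first | rfl | norm_num [sign] at h

lemma sum_sign_eq_ite {G : Type*} [AddGroup G] [Fintype G] (f : G →+ ZMod 2) :
    ∑ g, sign (f g) = if f = 0 then (Fintype.card G : ℂ) else 0 := by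
  have hzero : signChar.compAddMonoidHom f = 0 ↔ f = 0 := by
    rw [← (AddChar.compAddMonoidHom_injective_right _ signChar_injective).eq_iff]
    have : signChar.compAddMonoidHom (0 : G →+ ZMod 2) = 0 := by ext; simp
    rw [this]
  simpa [hzero] using AddChar.sum_eq_ite (signChar.compAddMonoidHom f)

lemma dotProductBilin_nondegenerate (R m : Type*) [CommRing R] [Fintype m] :
    (dotProductBilin R R : (m → R) →ₗ[R] (m → R) →ₗ[R] R).Nondegenerate :=
  ⟨fun x hx => dotProduct_eq_zero x hx,
    fun y hy => dotProduct_eq_zero y fun x => dotProduct_comm y x ▸ hy x⟩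

abbrev pairingForm (n : ℕ) : LinearMap.BilinForm (ZMod 2) (V n) :=
  dotProductBilin (ZMod 2) (ZMod 2)

lemma perp_eq_orthogonal {n : ℕ} (A : Submodule (ZMod 2) (V n)) :
    perp A = (pairingForm n).orthogonal A := by
  ext x
  simp [perp, LinearMap.BilinForm.mem_orthogonal_iff, pairing_eq_dotProduct]

lemma card_mul_card_perp {n : ℕ} (A : Submodule (ZMod 2) (V n)) :
    Nat.card A * Nat.card (perp A) = 2 ^ n := by
  rw [Module.natCard_eq_pow_finrank (K := ZMod 2) (V := A),
    Module.natCard_eq_pow_finrank (K := ZMod 2) (V := perp A), ← pow_add, perp_eq_orthogonal,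
    LinearMap.BilinForm.finrank_orthogonal (dotProductBilin_nondegenerate _ _), Nat.card_zmod,
    Nat.add_sub_cancel' (Submodule.finrank_le A), Module.finrank_fin_fun]

lemma sum_sign_pairing_eq_ite {n : ℕ} (A : Submodule (ZMod 2) (V n)) (x : V n) :
    ∑ a : A, sign (pairing x a) = if x ∈ perp A then (Nat.card A : ℂ) else 0 := by
  let f : A →+ ZMod 2 := (pairingForm n x).toAddMonoidHom.comp A.subtype.toAddMonoidHom
  have hf : f = 0 ↔ x ∈ perp A := by
    simp [f, DFunLike.ext_iff, perp, pairing_eq_dotProduct, dotProduct_comm x]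
  have hsum := sum_sign_eq_ite f
  simp only [hf] at hsum
  rwa [Nat.card_eq_fintype_card]

lemma subspaceState_apply {n : ℕ} (A : Submodule (ZMod 2) (V n)) (x : V n) :
    subspaceState A x = if x ∈ A then (√(Nat.card A : ℝ) : ℂ)⁻¹ else 0 := by
  simp only [subspaceState, WithLp.ofLp_smul, WithLp.ofLp_sum, PiLp.ofLp_single, Pi.smul_apply,
    Finset.sum_apply, Pi.single_apply, Finset.sum_boole, smul_eq_mul]
  split_ifs with hx
  · rw [Finset.card_eq_one.mpr ⟨⟨x, hx⟩, by ext; simp [eq_comm, Subtype.ext_iff]⟩]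
    simp
  · rw [Finset.card_eq_zero.mpr
      (Finset.filter_eq_empty_iff.mpr fun a _ h => hx (by rw [h]; exact a.2))]
    simp

lemma mulVec_subspaceState_apply {n : ℕ} (M : Matrix (V n) (V n) ℂ)
    (A : Submodule (ZMod 2) (V n)) (x : V n) :
    M.mulVec (subspaceState A) x = (√(Nat.card A : ℝ) : ℂ)⁻¹ * ∑ a : A, M x a := by
  simp [subspaceState, Matrix.mulVec_smul, Matrix.mulVec_sum]

lemma inv_sqrt_mul_inv_sqrt_mul_eq_inv_sqrt (b : ℝ) {a : ℝ} (ha : 0 < a) :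
    (√a)⁻¹ * ((√(a * b))⁻¹ * a) = (√b)⁻¹ := by
  have hsa : 0 < √a := Real.sqrt_pos.mpr ha
  rw [Real.sqrt_mul ha.le]
  field_simp
  rw [Real.sq_sqrt ha.le]

theorem hadamard_mulVec_subspaceState_general
    {n : ℕ} (A : Submodule (ZMod 2) (V n)) :
    (Hmat n).mulVec (subspaceState A) = (subspaceState (perp A) : EuclideanSpace ℂ (V n)) := by
  funext x
  rw [mulVec_subspaceState_apply, subspaceState_apply]
  simp only [Hmat, Matrix.of_apply, ← Finset.mul_sum, sum_sign_pairing_eq_ite]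
  split_ifs with hx
  · have hA : (0 : ℝ) < Nat.card A := Nat.cast_pos.mpr Nat.card_pos
    have hcard : (2 : ℝ) ^ n = Nat.card A * Nat.card (perp A) := by
      exact_mod_cast (card_mul_card_perp A).symm
    rw [hcard]
    exact_mod_cast congrArg Complex.ofReal
      (inv_sqrt_mul_inv_sqrt_mul_eq_inv_sqrt (Nat.card (perp A)) hA)
  · simp

/-- Applying the Hadamard transform to the uniform superposition over `A` produces the
uniform superposition over `A^⊥`. -/
theorem hadamard_mulVec_subspaceState
    {n : ℕ} (hn : 0 < n) (A : Submodule (ZMod 2) (V n)) :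
    (Hmat n).mulVec (subspaceState A) = (subspaceState (perp A) : EuclideanSpace ℂ (V n)) :=
  hadamard_mulVec_subspaceState_general A
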